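/- More generally, every Markov mapping p ↦ pQ from R_+^m to R_+^n (Q a row-stochastic partition matrix with positive entries on its support) is an isometry for the Fisher metric formula extended to the positive cone: for p ∈ R_+^m and arbitrary u, v ∈ R^m, sum_{j} (uQ)_j (vQ)_j / (pQ)_j = sum_i u_i v_i / p_i. -/

import Mathlib

/-!
Each column `j` of `Q` has its only possibly nonzero entry in row `part j`, so the `j`-th
coordinate of `wQ` is `w (part j) * Q (part j) j`. Hence the `j`-th Fisher summand equals
`u i * v i / p i * Q i j` with `i = part j`, and summing over the fibre of `part` above `i`
contributes the row sum of `Q`, which is `1`.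
-/

open Finset

section PartitionMatrix

variable {ι κ R : Type*} [Fintype ι] (Q : ι → κ → R) (part : κ → ι)

theorem sum_mul_col_eq_of_support_part [Semiring R] (w : ι → R) (j : κ)
    (hsupp : ∀ i, Q i j ≠ 0 → part j = i) :
    ∑ i, w i * Q i j = w (part j) * Q (part j) j :=
  sum_eq_single (part j)
    (fun i _ hne => by rw [not_imp_comm.mp (hsupp i) (Ne.symm hne), mul_zero])
    (fun h => absurd (mem_univ _) h)

theorem sum_mul_part_eq_sum_of_fiber_sum_eq_one [Fintype κ] [DecidableEq ι] [CommSemiring R]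
    (hsum : ∀ i, ∑ j ∈ univ.filter (fun j => part j = i), Q i j = 1) (f : ι → R) :
    ∑ j, f (part j) * Q (part j) j = ∑ i, f i := by
  rw [← sum_fiberwise univ part]
  refine sum_congr rfl fun i _ => ?_
  calc ∑ j ∈ univ.filter (fun j => part j = i), f (part j) * Q (part j) j
      = ∑ j ∈ univ.filter (fun j => part j = i), f i * Q i j :=
        sum_congr rfl fun j hj => by rw [(mem_filter.mp hj).2]
    _ = f i := by rw [← mul_sum, hsum i, mul_one]

end PartitionMatrix

theorem mul_mul_mul_div_mul_right {K : Type*} [Field K] (a b c q : K) :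
    a * q * (b * q) / (c * q) = a * b / c * q := by
  rcases eq_or_ne q 0 with rfl | hq
  · simp
  · rw [mul_mul_mul_comm, ← mul_assoc, mul_div_mul_right _ _ hq, mul_div_right_comm]

theorem markov_map_fisher_isometry_cone_general {m n : ℕ}
    (Q : Matrix (Fin m) (Fin n) ℝ) (part : Fin n → Fin m)
    (hsupp : ∀ i j, Q i j ≠ 0 → part j = i)
    (hsum : ∀ i : Fin m,
      ∑ j ∈ Finset.univ.filter (fun j => part j = i), Q i j = 1)
    (p : Fin m → ℝ) (u v : Fin m → ℝ) :
    ∑ j, (∑ i, u i * Q i j) * (∑ i, v i * Q i j) / (∑ i, p i * Q i j)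
      = ∑ i, u i * v i / p i := by
  have hcol (w : Fin m → ℝ) (j : Fin n) :=
    sum_mul_col_eq_of_support_part Q part w j (fun i => hsupp i j)
  calc ∑ j, (∑ i, u i * Q i j) * (∑ i, v i * Q i j) / (∑ i, p i * Q i j)
      = ∑ j, u (part j) * v (part j) / p (part j) * Q (part j) j :=
        sum_congr rfl fun j _ => by rw [hcol u, hcol v, hcol p, mul_mul_mul_div_mul_right]
    _ = ∑ i, u i * v i / p i :=
        sum_mul_part_eq_sum_of_fiber_sum_eq_one Q part hsum fun i => u i * v i / p i

/-- Every Markov mapping `p ↦ pQ` from `R_+^m` to `R_+^n` (with `Q` a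
row-stochastic partition matrix, positive on its support) is an isometry for the
Fisher metric extended to the positive cone: for strictly positive `p` and arbitrary
`u, v ∈ R^m`, `∑_j (uQ)_j (vQ)_j / (pQ)_j = ∑_i u_i v_i / p_i`. -/
theorem markov_map_fisher_isometry_cone {m n : ℕ}
    (Q : Matrix (Fin m) (Fin n) ℝ) (part : Fin n → Fin m)
    (hsupp : ∀ i j, Q i j ≠ 0 → part j = i)
    (hpos : ∀ j, 0 < Q (part j) j)
    (hsum : ∀ i : Fin m,
      ∑ j ∈ Finset.univ.filter (fun j => part j = i), Q i j = 1)
    (p : Fin m → ℝ) (hp : ∀ i, 0 < p i) (u v : Fin m → ℝ) :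
    ∑ j, (∑ i, u i * Q i j) * (∑ i, v i * Q i j) / (∑ i, p i * Q i j)
      = ∑ i, u i * v i / p i :=
  markov_map_fisher_isometry_cone_general Q part hsupp hsum p u v
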